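/- Let g : ℝ² → ℝ be a C³ function vanishing outside the open square (−M,M)², and let p₀ be a polynomial with |p₀(x,y) − ∂x∂y∂y g(x,y)| < ε for all (x,y) ∈ [−M,M]². Define p(x,y) = ∫_{−M}^{x} ∫_{−M}^{y} ∫_{−M}^{y} p₀(u,v) dv dv du. Then for all (x,y) ∈ [−M,M]², the second partial derivative of p with respect to y satisfies |∂y² p(x,y) − ∂y² g(x,y)| ≤ 2Mε. -/

import Mathlib

/-!
Differentiating the triple primitive twice in `y` leaves `∫_{-M}^x p₀(u, y) du`. Since `g`
vanishes on the edge `x = -M`, so does `∂y² g`, and the fundamental theorem of calculus gives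
`∂y² g(x, y) = ∫_{-M}^x ∂x∂y² g(u, y) du`. The difference of the two integrals has integrand
bounded by `ε` on an interval of length at most `2M`.
-/

open MeasureTheory intervalIntegral

section IntervalFubini

variable {E : Type*} [NormedAddCommGroup E] [NormedSpace ℝ E]

theorem intervalIntegral_integral_swap [CompleteSpace E] {f : ℝ × ℝ → E} (hf : Continuous f)
    (a b c d : ℝ) :
    ∫ u in a..b, ∫ v in c..d, f (u, v) = ∫ v in c..d, ∫ u in a..b, f (u, v) := by
  have hswap : ∫ u in Set.uIoc a b, ∫ v in Set.uIoc c d, f (u, v)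
      = ∫ v in Set.uIoc c d, ∫ u in Set.uIoc a b, f (u, v) := by
    refine integral_integral_swap ?_
    rw [Measure.prod_restrict]
    exact (hf.continuousOn.integrableOn_compact (isCompact_uIcc.prod isCompact_uIcc)).mono_set
      (Set.prod_mono Set.uIoc_subset_uIcc Set.uIoc_subset_uIcc)
  simp_rw [intervalIntegral_eq_integral_uIoc, MeasureTheory.integral_smul, hswap]
  rw [smul_comm]

theorem continuous_intervalIntegral_fst {f : ℝ × ℝ → E} (hf : Continuous f) (a b : ℝ) :
    Continuous fun v => ∫ u in a..b, f (u, v) :=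
  continuous_parametric_intervalIntegral_of_continuous' (by fun_prop) a b

theorem continuous_intervalIntegral_snd {f : ℝ × ℝ → E} (hf : Continuous f) (c : ℝ) :
    Continuous fun q : ℝ × ℝ => ∫ v in c..q.2, f (q.1, v) :=
  continuous_parametric_intervalIntegral_of_continuous (by fun_prop) continuous_snd

theorem hasDerivAt_intervalIntegral_intervalIntegral [CompleteSpace E] {f : ℝ × ℝ → E}
    (hf : Continuous f) (a b c y : ℝ) :
    HasDerivAt (fun y' => ∫ u in a..b, ∫ v in c..y', f (u, v)) (∫ u in a..b, f (u, y)) y := by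
  simp_rw [intervalIntegral_integral_swap hf a b c]
  exact (continuous_intervalIntegral_fst hf a b).integral_hasStrictDerivAt c y |>.hasDerivAt

theorem iteratedDeriv_two_intervalIntegral_triple [CompleteSpace E] {f : ℝ × ℝ → E}
    (hf : Continuous f) (a b c d y : ℝ) :
    iteratedDeriv 2 (fun y' => ∫ u in a..b, ∫ t in c..y', ∫ v in d..t, f (u, v)) y
      = ∫ u in a..b, f (u, y) := by
  have hF := continuous_intervalIntegral_snd hf d
  have hderiv : deriv (fun y' => ∫ u in a..b, ∫ t in c..y', ∫ v in d..t, f (u, v))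
      = fun t => ∫ u in a..b, ∫ v in d..t, f (u, v) :=
    funext fun t => (hasDerivAt_intervalIntegral_intervalIntegral hF a b c t).deriv
  rw [iteratedDeriv_succ, iteratedDeriv_one, hderiv]
  exact (hasDerivAt_intervalIntegral_intervalIntegral hf a b d y).deriv

end IntervalFubini

section Slices

variable {F : Type*} [NormedAddCommGroup F] [NormedSpace ℝ F]

theorem deriv_comp_prodMk_right {G : ℝ × ℝ → F} (hG : Differentiable ℝ G) (x : ℝ) :
    deriv (fun y => G (x, y)) = fun y => fderiv ℝ G (x, y) (0, 1) :=
  funext fun y => ((hG (x, y)).hasFDerivAt.comp_hasDerivAt y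
    ((hasDerivAt_const y x).prodMk (hasDerivAt_id y))).deriv

theorem contDiff_iteratedDeriv_comp_prodMk_right {n : WithTop ℕ∞} {k : ℕ} {G : ℝ × ℝ → F}
    (hG : ContDiff ℝ (n + k) G) :
    ContDiff ℝ n fun q : ℝ × ℝ => iteratedDeriv k (fun y => G (q.1, y)) q.2 := by
  induction k generalizing G with
  | zero => simpa using hG
  | succ k ih =>
    simp_rw [iteratedDeriv_succ', deriv_comp_prodMk_right (hG.differentiable (by simp))]
    refine ih ((hG.fderiv_right ?_).clm_apply contDiff_const)
    push_cast
    rw [add_assoc]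

theorem contDiff_iteratedDeriv_comp_prodMk_right_at {n : WithTop ℕ∞} {k : ℕ} {G : ℝ × ℝ → F}
    (hG : ContDiff ℝ (n + k) G) (y : ℝ) :
    ContDiff ℝ n fun x => iteratedDeriv k (fun y' => G (x, y')) y := by
  simpa only [Function.comp_def] using
    (contDiff_iteratedDeriv_comp_prodMk_right hG).comp (contDiff_prodMk_left y)

theorem iteratedDeriv_comp_prodMk_right_eq_integral_deriv [CompleteSpace F] {k : ℕ}
    {G : ℝ × ℝ → F} (hG : ContDiff ℝ (1 + k) G) {a : ℝ} (hGa : ∀ y, G (a, y) = 0) (x y : ℝ) :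
    iteratedDeriv k (fun y' => G (x, y')) y
      = ∫ u in a..x, deriv (fun x' => iteratedDeriv k (fun y' => G (x', y')) y) u := by
  have hφ := contDiff_iteratedDeriv_comp_prodMk_right_at hG y
  have hslice : (fun y' => G (a, y')) = 0 := funext hGa
  rw [integral_deriv_eq_sub (fun u _ => hφ.differentiable one_ne_zero u)
    ((hφ.continuous_deriv le_rfl).intervalIntegrable _ _), hslice]
  simp

end Slices

theorem continuous_mvPolynomial_eval_pair (p : MvPolynomial (Fin 2) ℝ) :
    Continuous fun q : ℝ × ℝ => MvPolynomial.eval ![q.1, q.2] p :=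
  (MvPolynomial.continuous_eval p).comp <| continuous_pi <| Fin.forall_fin_two.2
    ⟨continuous_fst, continuous_snd⟩

theorem approx_second_partial_general (M ε : ℝ)
    (g : ℝ × ℝ → ℝ) (hg : ContDiff ℝ 3 g)
    (hsupp : ∀ q : ℝ × ℝ, q ∉ Set.Ioo (-M) M ×ˢ Set.Ioo (-M) M → g q = 0)
    (p₀ : MvPolynomial (Fin 2) ℝ)
    (hp₀ : ∀ q ∈ Set.Icc (-M) M ×ˢ Set.Icc (-M) M,
      |MvPolynomial.eval ![q.1, q.2] p₀ -
        deriv (fun x : ℝ => iteratedDeriv 2 (fun y : ℝ => g (x, y)) q.2) q.1| < ε) :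
    ∀ q ∈ Set.Icc (-M) M ×ˢ Set.Icc (-M) M,
      |iteratedDeriv 2
          (fun y : ℝ => ∫ u in (-M)..q.1, ∫ t in (-M)..y, ∫ v in (-M)..t,
            MvPolynomial.eval ![u, v] p₀) q.2
        - iteratedDeriv 2 (fun y : ℝ => g (q.1, y)) q.2| ≤ 2 * M * ε := by
  rintro ⟨x, y⟩ ⟨⟨hxl, hxu⟩, hy⟩
  dsimp only at hxl hxu hy ⊢
  have hg' : ContDiff ℝ (1 + 2) g := by norm_num; exact hg
  have hpoly := continuous_mvPolynomial_eval_pair p₀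
  have hpoly_int : IntervalIntegrable (fun u => MvPolynomial.eval ![u, y] p₀) volume (-M) x :=
    (hpoly.comp (.prodMk_left y)).intervalIntegrable _ _
  have hderiv_int := ((contDiff_iteratedDeriv_comp_prodMk_right_at hg' y).continuous_deriv
    le_rfl).intervalIntegrable (μ := volume) (-M) x
  rw [iteratedDeriv_two_intervalIntegral_triple hpoly,
    iteratedDeriv_comp_prodMk_right_eq_integral_deriv hg' (a := -M)
      (fun y' => hsupp _ (by simp)),
    ← integral_sub hpoly_int hderiv_int, ← Real.norm_eq_abs]
  have hε : 0 ≤ ε := (abs_nonneg _).trans (hp₀ (x, y) ⟨⟨hxl, hxu⟩, hy⟩).le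
  calc _ ≤ ε * |x - -M| := by
        refine intervalIntegral.norm_integral_le_of_norm_le_const fun u hu => ?_
        rw [Set.uIoc_of_le hxl] at hu
        exact (hp₀ (u, y) ⟨⟨hu.1.le, hu.2.trans hxu⟩, hy⟩).le
    _ ≤ ε * (2 * M) := by gcongr; rw [abs_le]; constructor <;> linarith
    _ = 2 * M * ε := by ring

/-- Part of Lemma 3.6: the second `y`-derivative of the triple primitive `p` of the
polynomial `p₀` approximates `∂y² g` within `2Mε` on the square `[-M,M]²`. -/
theorem approx_second_partial (M ε : ℝ) (hM : 0 < M) (hε : 0 < ε)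
    (g : ℝ × ℝ → ℝ) (hg : ContDiff ℝ 3 g)
    (hsupp : ∀ q : ℝ × ℝ, q ∉ Set.Ioo (-M) M ×ˢ Set.Ioo (-M) M → g q = 0)
    (p₀ : MvPolynomial (Fin 2) ℝ)
    (hp₀ : ∀ q ∈ Set.Icc (-M) M ×ˢ Set.Icc (-M) M,
      |MvPolynomial.eval ![q.1, q.2] p₀ -
        deriv (fun x : ℝ => iteratedDeriv 2 (fun y : ℝ => g (x, y)) q.2) q.1| < ε) :
    ∀ q ∈ Set.Icc (-M) M ×ˢ Set.Icc (-M) M,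
      |iteratedDeriv 2
          (fun y : ℝ => ∫ u in (-M)..q.1, ∫ t in (-M)..y, ∫ v in (-M)..t,
            MvPolynomial.eval ![u, v] p₀) q.2
        - iteratedDeriv 2 (fun y : ℝ => g (q.1, y)) q.2| ≤ 2 * M * ε :=
  approx_second_partial_general M ε g hg hsupp p₀ hp₀
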